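/- The three-term theta identity ϑ₃(τ)² θ₃(x|τ)² = ϑ₂(τ)² θ₂(x|τ)² + ϑ₄(τ)² θ₄(x|τ)² holds for all x ∈ ℂ and τ in the upper half-plane, where ϑⱼ(τ) = θⱼ(0|τ). -/

import Mathlib

/-!
Writing `m² + n² = ((m + n)² + (m - n)²) / 2` and splitting `ℤ²` according to the parity of
`m + n` gives the duplication formulas
`θ₃(x|τ) θ₃(0|τ) = a² + b²`, `θ₄(x|τ) θ₄(0|τ) = a² - b²`, `θ₂(x|τ) θ₂(0|τ) = 2ab`
with `a = θ₃(x|2τ)` and `b = θ₂(x|2τ)`. The identity is then the Pythagorean relation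
`(a² + b²)² = (2ab)² + (a² - b²)²`.
-/

open scoped Real
open Complex

noncomputable def jacobiθ₁ (x τ : ℂ) : ℂ :=
  -I * ∑' k : ℤ, (-1 : ℂ) ^ k *
    Complex.exp ((π : ℂ) * I * ((k : ℂ) + 1/2)^2 * τ + (2*(k : ℂ)+1) * (π : ℂ) * I * x)

noncomputable def jacobiθ₂ (x τ : ℂ) : ℂ :=
  ∑' k : ℤ,
    Complex.exp ((π : ℂ) * I * ((k : ℂ) + 1/2)^2 * τ + (2*(k : ℂ)+1) * (π : ℂ) * I * x)

noncomputable def jacobiθ₃ (x τ : ℂ) : ℂ :=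
  ∑' k : ℤ, Complex.exp ((π : ℂ) * I * (k : ℂ)^2 * τ + 2 * (k : ℂ) * (π : ℂ) * I * x)

noncomputable def jacobiθ₄ (x τ : ℂ) : ℂ :=
  ∑' k : ℤ, (-1 : ℂ) ^ k *
    Complex.exp ((π : ℂ) * I * (k : ℂ)^2 * τ + 2 * (k : ℂ) * (π : ℂ) * I * x)

noncomputable def thetaTerm (u z τ : ℂ) : ℂ :=
  cexp (π * I * τ * u ^ 2 + 2 * π * I * z * u)

noncomputable def thetaChar (s z τ : ℂ) : ℂ :=
  ∑' k : ℤ, thetaTerm (k + s) z τ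

lemma thetaTerm_add_mul_sub (a b x y τ : ℂ) :
    thetaTerm (a + b) x τ * thetaTerm (a - b) y τ =
      thetaTerm a (x + y) (2 * τ) * thetaTerm b (x - y) (2 * τ) := by
  simp only [thetaTerm, ← exp_add]
  ring_nf

lemma thetaTerm_int_add (k : ℤ) (s z τ : ℂ) :
    thetaTerm (k + s) z τ = thetaTerm s z τ * jacobiTheta₂_term k (z + s * τ) τ := by
  rw [thetaTerm, thetaTerm, jacobiTheta₂_term, ← exp_add]
  ring_nf

lemma summable_norm_thetaTerm {τ : ℂ} (hτ : 0 < τ.im) (s z : ℂ) :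
    Summable fun k : ℤ => ‖thetaTerm (k + s) z τ‖ := by
  simp_rw [thetaTerm_int_add, norm_mul]
  exact (summable_norm_iff.mpr ((summable_jacobiTheta₂_term_iff _ τ).mpr hτ)).mul_left _

lemma hasSum_thetaTerm_mul {τ : ℂ} (hτ : 0 < τ.im) (s t z w : ℂ) :
    HasSum (fun p : ℤ × ℤ => thetaTerm (p.1 + s) z τ * thetaTerm (p.2 + t) w τ)
      (thetaChar s z τ * thetaChar t w τ) := by
  have hs := summable_norm_thetaTerm hτ s z
  have ht := summable_norm_thetaTerm hτ t w
  rw [thetaChar, thetaChar, tsum_mul_tsum_of_summable_norm hs ht]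
  exact (summable_mul_of_summable_norm hs ht).hasSum

noncomputable def sumDiffEquiv : (ℤ × ℤ) ⊕ (ℤ × ℤ) ≃ ℤ × ℤ :=
  Equiv.ofBijective
    (Sum.elim (fun p => (p.1 + p.2, p.1 - p.2)) (fun p => (p.1 + p.2 + 1, p.1 - p.2)))
    (by
      constructor
      · rintro (⟨a, b⟩ | ⟨a, b⟩) (⟨c, d⟩ | ⟨c, d⟩) h <;>
          simp only [Sum.elim_inl, Sum.elim_inr, Prod.mk.injEq, reduceCtorEq, Sum.inl.injEq,
            Sum.inr.injEq] at h ⊢ <;> omega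
      · rintro ⟨m, n⟩
        obtain ⟨j, hj⟩ | ⟨j, hj⟩ := Int.even_or_odd (m + n)
        · exact ⟨.inl (j, m - j), by simp only [Sum.elim_inl, Prod.mk.injEq]; omega⟩
        · exact ⟨.inr (j, m - j - 1), by simp only [Sum.elim_inr, Prod.mk.injEq]; omega⟩)

@[simp]
lemma sumDiffEquiv_inl (p : ℤ × ℤ) : sumDiffEquiv (.inl p) = (p.1 + p.2, p.1 - p.2) := rfl

@[simp]
lemma sumDiffEquiv_inr (p : ℤ × ℤ) : sumDiffEquiv (.inr p) = (p.1 + p.2 + 1, p.1 - p.2) := rfl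

theorem thetaChar_mul_thetaChar {τ : ℂ} (hτ : 0 < τ.im) (s x y : ℂ) :
    thetaChar s x τ * thetaChar s y τ =
      thetaChar s (x + y) (2 * τ) * thetaChar 0 (x - y) (2 * τ) +
        thetaChar (s + 1 / 2) (x + y) (2 * τ) * thetaChar (1 / 2) (x - y) (2 * τ) := by
  have h2τ : 0 < (2 * τ).im := by simpa using hτ
  set F := fun p : ℤ × ℤ => thetaTerm (p.1 + s) x τ * thetaTerm (p.2 + s) y τ
  have hF : F ∘ sumDiffEquiv = Sum.elim
      (fun p => thetaTerm (p.1 + s) (x + y) (2 * τ) * thetaTerm (p.2 + 0) (x - y) (2 * τ))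
      (fun p => thetaTerm (p.1 + (s + 1 / 2)) (x + y) (2 * τ) *
        thetaTerm (p.2 + 1 / 2) (x - y) (2 * τ)) := by
    ext (⟨j, k⟩ | ⟨j, k⟩) <;>
      simp only [F, Function.comp_apply, sumDiffEquiv_inl, sumDiffEquiv_inr, Sum.elim_inl,
        Sum.elim_inr, ← thetaTerm_add_mul_sub] <;> congr 2 <;> push_cast <;> ring
  refine (hasSum_thetaTerm_mul hτ s s x y).unique (sumDiffEquiv.hasSum_iff.mp ?_)
  rw [hF]
  exact (hasSum_thetaTerm_mul h2τ s 0 (x + y) (x - y)).sum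
    (hasSum_thetaTerm_mul h2τ (s + 1 / 2) (1 / 2) (x + y) (x - y))

lemma thetaChar_add_one_left (s z τ : ℂ) : thetaChar (s + 1) z τ = thetaChar s z τ := by
  conv_rhs => rw [thetaChar, ← (Equiv.addRight (1 : ℤ)).tsum_eq]
  refine tsum_congr fun k => ?_
  rw [Equiv.coe_addRight]
  push_cast
  ring_nf

lemma thetaChar_add_one (s z τ : ℂ) :
    thetaChar s (z + 1) τ = cexp (2 * π * I * s) * thetaChar s z τ := by
  rw [thetaChar, thetaChar, ← tsum_mul_left]
  refine tsum_congr fun k => ?_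
  rw [thetaTerm, thetaTerm, ← exp_add]
  exact exp_eq_exp_iff_exists_int.mpr ⟨k, by ring⟩

lemma thetaChar_one_left (z τ : ℂ) : thetaChar 1 z τ = thetaChar 0 z τ := by
  simpa using thetaChar_add_one_left 0 z τ

lemma thetaChar_zero_add_one (z τ : ℂ) : thetaChar 0 (z + 1) τ = thetaChar 0 z τ := by
  simpa using thetaChar_add_one 0 z τ

lemma thetaChar_half_add_one (z τ : ℂ) :
    thetaChar (1 / 2) (z + 1) τ = -thetaChar (1 / 2) z τ := by
  rw [thetaChar_add_one, show 2 * π * I * (1 / 2) = π * I by ring, exp_pi_mul_I, neg_one_mul]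

lemma jacobiθ₂_eq_thetaChar (z τ : ℂ) : jacobiθ₂ z τ = thetaChar (1 / 2) z τ := by
  refine tsum_congr fun k => ?_
  rw [thetaTerm]
  ring_nf

lemma jacobiθ₃_eq_thetaChar (z τ : ℂ) : jacobiθ₃ z τ = thetaChar 0 z τ := by
  refine tsum_congr fun k => ?_
  rw [thetaTerm]
  ring_nf

lemma jacobiθ₄_eq_thetaChar (z τ : ℂ) : jacobiθ₄ z τ = thetaChar 0 (z + 1 / 2) τ := by
  refine tsum_congr fun k => ?_
  rw [thetaTerm, ← exp_pi_mul_I, ← exp_int_mul, ← exp_add]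
  ring_nf

theorem theta_three_term_identity (x τ : ℂ) (hτ : 0 < τ.im) :
    jacobiθ₃ 0 τ ^ 2 * jacobiθ₃ x τ ^ 2 =
      jacobiθ₂ 0 τ ^ 2 * jacobiθ₂ x τ ^ 2 + jacobiθ₄ 0 τ ^ 2 * jacobiθ₄ x τ ^ 2 := by
  have h₃ := thetaChar_mul_thetaChar hτ 0 x 0
  have h₂ := thetaChar_mul_thetaChar hτ (1 / 2) x 0
  have h₄ := thetaChar_mul_thetaChar hτ 0 (x + 1 / 2) (1 / 2)
  rw [add_halves, thetaChar_one_left] at h₂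
  rw [add_assoc, add_halves, add_sub_cancel_right, thetaChar_zero_add_one, zero_add,
    thetaChar_half_add_one, neg_mul, ← sub_eq_add_neg] at h₄
  simp only [add_zero, sub_zero, zero_add] at h₃ h₂
  simp only [jacobiθ₂_eq_thetaChar, jacobiθ₃_eq_thetaChar, jacobiθ₄_eq_thetaChar, zero_add]
  set a := thetaChar 0 x (2 * τ)
  set b := thetaChar (1 / 2) x (2 * τ)
  calc thetaChar 0 0 τ ^ 2 * thetaChar 0 x τ ^ 2 = (a * a + b * b) ^ 2 := by rw [← h₃]; ring
    _ = (b * a + a * b) ^ 2 + (a * a - b * b) ^ 2 := by ring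
    _ = _ := by rw [← h₂, ← h₄]; ring
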